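/- Let z₁ < … < z_m be real numbers with Σ_{j=1}^{m−1}(z_{j+1}−z_j) ≤ 1, and let the Laplace mechanism add Laplace noise with scale b = 1/ε. With Voronoi cells Θ_i as above, Σ_{i=1}^m Pr(z_i + Lap(b) ∈ Θ_i) = m − Σ_{j=1}^{m−1} e^{−εΔ_j/2} where Δ_j = z_{j+1}−z_j, and hence (1/m)(Σ_i Pr(z_i + Lap ∈ Θ_i) − 1) ≤ ((m−1)/m)·(1 − e^{−ε/(2(m−1))}). -/

import Mathlib

open MeasureTheory Set Real

lemma intExpIoi (ε c : ℝ) (hε : 0 < ε) :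
    ∫ x in Ioi c, Real.exp (-(ε * x)) = Real.exp (-(ε * c)) / ε := by
  have h := integral_comp_mul_left_Ioi (fun x => Real.exp (-x)) c hε
  simp only [smul_eq_mul] at h
  rw [h, integral_exp_neg_Ioi]
  field_simp

lemma intOnExpIoi (ε c : ℝ) (hε : 0 < ε) :
    IntegrableOn (fun x => Real.exp (-(ε * x))) (Ioi c) := by
  simpa [neg_mul] using exp_neg_integrableOn_Ioi c hε

lemma intExpIic (ε c : ℝ) (hε : 0 < ε) :
    ∫ x in Iic c, Real.exp (ε * x) = Real.exp (ε * c) / ε := by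
  have h := integral_comp_neg_Iic c (fun x => Real.exp (-(ε * x)))
  simp only [mul_neg, neg_neg] at h
  rw [h, intExpIoi ε (-c) hε]
  ring_nf

lemma intOnExpIic (ε c : ℝ) (hε : 0 < ε) :
    IntegrableOn (fun x => Real.exp (ε * x)) (Iic c) := by
  have A : MeasurableEmbedding fun x : ℝ => -x :=
    (Homeomorph.neg ℝ).isClosedEmbedding.measurableEmbedding
  have h := intOnExpIoi ε (-c) hε
  rw [← Measure.map_neg_eq_self (volume : Measure ℝ)] at h
  rw [A.integrableOn_map_iff] at h
  have h2 : IntegrableOn (fun x => Real.exp (ε * x)) (Iio c) := by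
    simpa [Function.comp_def, neg_Iic] using h
  rwa [integrableOn_Iic_iff_integrableOn_Iio]


lemma expmul (A u v w : ℝ) (h : u + v = w) : A * Real.exp u * Real.exp v = A * Real.exp w := by
  rw [mul_assoc, ← Real.exp_add, h]

-- Laplace density integrable on ℝ
lemma lapInt (ε z : ℝ) (hε : 0 < ε) :
    Integrable (fun x => (ε / 2) * Real.exp (-ε * |x - z|)) := by
  rw [← integrableOn_univ, ← Iic_union_Ioi (a := z)]
  apply IntegrableOn.union
  · apply Integrable.congr (((intOnExpIic ε z hε).const_mul ((ε/2) * Real.exp (-(ε * z)))))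
    filter_upwards [ae_restrict_mem measurableSet_Iic] with x hx
    rw [abs_of_nonpos (by simpa using hx)]
    exact expmul _ _ _ _ (by ring)
  · apply Integrable.congr (((intOnExpIoi ε z hε).const_mul ((ε/2) * Real.exp (ε * z))))
    filter_upwards [ae_restrict_mem measurableSet_Ioi] with x hx
    rw [abs_of_nonneg (by simp at hx; linarith)]
    exact expmul _ _ _ _ (by ring)

-- CDF-style pieces
lemma lapIicLe (ε z c : ℝ) (hε : 0 < ε) (h : c ≤ z) :
    ∫ x in Iic c, (ε / 2) * Real.exp (-ε * |x - z|) = Real.exp (-ε * (z - c)) / 2 := by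
  have congr1 : ∫ x in Iic c, (ε / 2) * Real.exp (-ε * |x - z|)
      = ∫ x in Iic c, ((ε/2) * Real.exp (-(ε * z))) * Real.exp (ε * x) := by
    apply setIntegral_congr_fun measurableSet_Iic
    intro x hx
    simp only
    rw [abs_of_nonpos (by simp at hx; linarith)]
    exact (expmul _ _ _ _ (by ring)).symm
  rw [congr1, integral_const_mul, intExpIic ε c hε,
    show -ε * (z - c) = -(ε * z) + ε * c by ring, Real.exp_add]
  field_simp

lemma lapIic (ε z c : ℝ) (hε : 0 < ε) (h : z ≤ c) :
    ∫ x in Iic c, (ε / 2) * Real.exp (-ε * |x - z|) = 1 - Real.exp (-ε * (c - z)) / 2 := by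
  have hsplit : Iic c = Iic z ∪ Ioc z c := by rw [Iic_union_Ioc_eq_Iic h]
  have hdisj : Disjoint (Iic z) (Ioc z c) :=
    (Iic_disjoint_Ioi le_rfl).mono_right Ioc_subset_Ioi_self
  rw [hsplit, setIntegral_union hdisj measurableSet_Ioc
    ((lapInt ε z hε).integrableOn) ((lapInt ε z hε).integrableOn)]
  have h1 : ∫ x in Iic z, (ε / 2) * Real.exp (-ε * |x - z|) = 1/2 := by
    have := lapIicLe ε z z hε le_rfl
    simpa using this
  have h2 : ∫ x in Ioc z c, (ε / 2) * Real.exp (-ε * |x - z|)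
      = (1 - Real.exp (-ε * (c - z))) / 2 := by
    have congr2 : ∫ x in Ioc z c, (ε / 2) * Real.exp (-ε * |x - z|)
        = ∫ x in Ioc z c, ((ε/2) * Real.exp (ε * z)) * Real.exp (-(ε * x)) := by
      apply setIntegral_congr_fun measurableSet_Ioc
      intro x hx
      simp only
      rw [abs_of_nonneg (by simp at hx; linarith [hx.1])]
      exact (expmul _ _ _ _ (by ring)).symm
    have hIoc : ∫ x in Ioc z c, Real.exp (-(ε * x))
        = (Real.exp (-(ε * z)) - Real.exp (-(ε * c))) / ε := by
      have hun : Ioi z = Ioc z c ∪ Ioi c := (Ioc_union_Ioi_eq_Ioi h).symm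
      have hd : Disjoint (Ioc z c) (Ioi c) := Ioc_disjoint_Ioi le_rfl
      have := intExpIoi ε z hε
      rw [hun, setIntegral_union hd measurableSet_Ioi
        ((intOnExpIoi ε z hε).mono_set (by rw [hun]; exact subset_union_left))
        (intOnExpIoi ε c hε), intExpIoi ε c hε] at this
      field_simp at this ⊢
      linarith
    rw [congr2, integral_const_mul, hIoc]
    have key : Real.exp (ε * z) * Real.exp (-(ε * z)) = 1 := by
      rw [← Real.exp_add]; simp
    have key2 : Real.exp (ε * z) * Real.exp (-(ε * c)) = Real.exp (-(ε * (c - z))) := by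
      rw [← Real.exp_add]; ring_nf
    rw [neg_mul]
    field_simp
    nlinarith [key, key2]
  rw [h1, h2]; ring

set_option maxHeartbeats 1000000 in
lemma lapIci (ε z c : ℝ) (hε : 0 < ε) (h : c ≤ z) :
    ∫ x in Ici c, (ε / 2) * Real.exp (-ε * |x - z|) = 1 - Real.exp (-ε * (z - c)) / 2 := by
  rw [integral_Ici_eq_integral_Ioi]
  have hrefl : ∫ x in Iic (-c), (ε / 2) * Real.exp (-ε * |(-x) - z|)
      = ∫ x in Ioi c, (ε / 2) * Real.exp (-ε * |x - z|) := by
    simpa using integral_comp_neg_Iic (-c) (fun x => (ε / 2) * Real.exp (-ε * |x - z|))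
  rw [← hrefl]
  have congr3 : ∫ x in Iic (-c), (ε / 2) * Real.exp (-ε * |(-x) - z|)
      = ∫ x in Iic (-c), (ε / 2) * Real.exp (-ε * |x - (-z)|) := by
    apply setIntegral_congr_fun measurableSet_Iic
    intro x _
    simp only
    rw [show (-x) - z = -(x - (-z)) by ring, abs_neg]
  rw [congr3, lapIic ε (-z) (-c) hε (by linarith)]
  ring_nf

lemma lapIcc (ε z a b : ℝ) (hε : 0 < ε) (ha : a ≤ z) (hb : z ≤ b) :
    ∫ x in Icc a b, (ε / 2) * Real.exp (-ε * |x - z|)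
      = 1 - Real.exp (-ε * (z - a)) / 2 - Real.exp (-ε * (b - z)) / 2 := by
  rw [integral_Icc_eq_integral_Ioc]
  have hsplit : Iic b = Iic a ∪ Ioc a b := by rw [Iic_union_Ioc_eq_Iic (ha.trans hb)]
  have hdisj : Disjoint (Iic a) (Ioc a b) :=
    (Iic_disjoint_Ioi le_rfl).mono_right Ioc_subset_Ioi_self
  have hsum := lapIic ε z b hε hb
  rw [hsplit, setIntegral_union hdisj measurableSet_Ioc
    ((lapInt ε z hε).integrableOn) ((lapInt ε z hε).integrableOn),
    lapIicLe ε z a hε ha] at hsum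
  linarith

lemma abs_mid_lt (a b x : ℝ) (hab : a < b) : |x - a| ≤ |x - b| ↔ x ≤ (a + b) / 2 := by
  constructor
  · intro h
    have h2 : (x - a) ^ 2 ≤ (x - b) ^ 2 := by
      have := pow_le_pow_left₀ (abs_nonneg (x - a)) h 2
      simpa [sq_abs] using this
    nlinarith
  · intro h
    have h2 : (x - a) ^ 2 ≤ (x - b) ^ 2 := by nlinarith
    calc |x - a| = Real.sqrt ((x - a) ^ 2) := (Real.sqrt_sq_eq_abs _).symm
      _ ≤ Real.sqrt ((x - b) ^ 2) := Real.sqrt_le_sqrt h2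
      _ = |x - b| := Real.sqrt_sq_eq_abs _

lemma abs_mid_gt (a b x : ℝ) (hab : b < a) : |x - a| ≤ |x - b| ↔ (b + a) / 2 ≤ x := by
  constructor
  · intro h
    have h2 : (x - a) ^ 2 ≤ (x - b) ^ 2 := by
      have := pow_le_pow_left₀ (abs_nonneg (x - a)) h 2
      simpa [sq_abs] using this
    nlinarith
  · intro h
    have h2 : (x - a) ^ 2 ≤ (x - b) ^ 2 := by nlinarith
    calc |x - a| = Real.sqrt ((x - a) ^ 2) := (Real.sqrt_sq_eq_abs _).symm
      _ ≤ Real.sqrt ((x - b) ^ 2) := Real.sqrt_le_sqrt h2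
      _ = |x - b| := Real.sqrt_sq_eq_abs _

lemma vor_first (n : ℕ) (z : Fin (n + 2) → ℝ) (hz : StrictMono z) :
    {x : ℝ | ∀ k, |x - z 0| ≤ |x - z k|} = Iic ((z 0 + z 1) / 2) := by
  ext x
  simp only [mem_setOf_eq, mem_Iic]
  constructor
  · intro h
    have h01 : (0 : Fin (n + 2)) < 1 := by rw [Fin.lt_def]; simp
    exact (abs_mid_lt _ _ _ (hz h01)).mp (h 1)
  · intro h k
    rcases eq_or_ne k 0 with rfl | hk
    · exact le_refl _
    · have hk0 : (0 : Fin (n + 2)) < k := Fin.pos_of_ne_zero hk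
      have h1k : (1 : Fin (n + 2)) ≤ k := by
        rw [Fin.le_def, Fin.val_one]
        rw [Fin.lt_def] at hk0
        omega
      have := hz.monotone h1k
      rw [abs_mid_lt _ _ _ (hz hk0)]
      linarith

lemma vor_last (n : ℕ) (z : Fin (n + 2) → ℝ) (hz : StrictMono z) :
    {x : ℝ | ∀ k, |x - z (Fin.last (n + 1))| ≤ |x - z k|}
      = Ici ((z ⟨n, by omega⟩ + z (Fin.last (n + 1))) / 2) := by
  ext x
  simp only [mem_setOf_eq, mem_Ici]
  constructor
  · intro h
    have hlt : (⟨n, by omega⟩ : Fin (n + 2)) < Fin.last (n + 1) := by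
      rw [Fin.lt_def]; simp [Fin.last]
    exact (abs_mid_gt _ _ _ (hz hlt)).mp (h ⟨n, by omega⟩)
  · intro h k
    rcases eq_or_ne k (Fin.last (n + 1)) with rfl | hk
    · exact le_refl _
    · have hkl : k < Fin.last (n + 1) := Fin.lt_last_iff_ne_last.mpr hk
      have hkn : k ≤ (⟨n, by omega⟩ : Fin (n + 2)) := by
        rw [Fin.le_def]
        rw [Fin.lt_def] at hkl
        simp [Fin.last] at hkl ⊢
        omega
      have := hz.monotone hkn
      rw [abs_mid_gt _ _ _ (hz hkl)]
      linarith

lemma vor_mid (n : ℕ) (z : Fin (n + 2) → ℝ) (hz : StrictMono z) (i : Fin (n + 2))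
    (h0 : 0 < i.1) (h1 : i.1 < n + 1) :
    {x : ℝ | ∀ k, |x - z i| ≤ |x - z k|}
      = Icc ((z ⟨i.1 - 1, by omega⟩ + z i) / 2) ((z i + z ⟨i.1 + 1, by omega⟩) / 2) := by
  have hpred : (⟨i.1 - 1, by omega⟩ : Fin (n + 2)) < i := by rw [Fin.lt_def]; show i.1 - 1 < i.1; omega
  have hsucc : i < (⟨i.1 + 1, by omega⟩ : Fin (n + 2)) := by rw [Fin.lt_def]; simp
  ext x
  simp only [mem_setOf_eq, mem_Icc]
  constructor
  · intro h
    exact ⟨(abs_mid_gt _ _ _ (hz hpred)).mp (h _), (abs_mid_lt _ _ _ (hz hsucc)).mp (h _)⟩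
  · rintro ⟨hl, hr⟩ k
    rcases lt_trichotomy k i with hki | hki | hki
    · have hkp : k ≤ (⟨i.1 - 1, by omega⟩ : Fin (n + 2)) := by
        rw [Fin.le_def]; rw [Fin.lt_def] at hki; simp; omega
      have := hz.monotone hkp
      rw [abs_mid_gt _ _ _ (hz hki)]
      linarith
    · rw [hki]
    · have hks : (⟨i.1 + 1, by omega⟩ : Fin (n + 2)) ≤ k := by
        rw [Fin.le_def]; rw [Fin.lt_def] at hki; simp; omega
      have := hz.monotone hks
      rw [abs_mid_lt _ _ _ (hz hki)]
      linarith
theorem aux_eq (n : ℕ) (z : Fin (n + 2) → ℝ) (hz : StrictMono z) (ε : ℝ) (hε : 0 < ε) :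
    (∑ i, ∫ x in {x : ℝ | ∀ k, |x - z i| ≤ |x - z k|},
        (ε / 2) * Real.exp (-ε * |x - z i|)) =
      ((n + 2 : ℕ) : ℝ) - ∑ j : Fin (n + 1),
          Real.exp (-ε * (z j.succ - z j.castSucc) / 2) := by
  have hP : ∀ i : Fin (n + 2),
      (∫ x in {x : ℝ | ∀ k, |x - z i| ≤ |x - z k|}, (ε / 2) * Real.exp (-ε * |x - z i|))
        = 1 - (if h : 0 < i.1 then
              Real.exp (-ε * (z ⟨i.1, by omega⟩ - z ⟨i.1 - 1, by omega⟩) / 2) / 2 else 0)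
            - (if h : i.1 < n + 1 then
              Real.exp (-ε * (z ⟨i.1 + 1, by omega⟩ - z ⟨i.1, by omega⟩) / 2) / 2 else 0) := by
    intro i
    rcases Nat.eq_zero_or_pos i.1 with h0 | h0
    · have hi : i = 0 := Fin.ext h0
      subst hi
      rw [dif_neg (by simp), dif_pos (by omega)]
      have h01 : z 0 < z 1 := hz (by rw [Fin.lt_def]; simp)
      rw [vor_first n z hz, lapIic ε (z 0) ((z 0 + z 1) / 2) hε (by linarith)]
      have : (⟨(0 : Fin (n+2)).1 + 1, by omega⟩ : Fin (n + 2)) = 1 := by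
        apply Fin.ext; simp
      rw [this]
      have : (⟨(0 : Fin (n+2)).1, by omega⟩ : Fin (n + 2)) = 0 := by
        apply Fin.ext; simp
      rw [this]
      rw [show -ε * ((z 0 + z 1) / 2 - z 0) = -ε * (z 1 - z 0) / 2 by ring]
      ring
    · rcases Nat.lt_or_ge i.1 (n + 1) with h1 | h1
      · -- interior
        have hpred : z ⟨i.1 - 1, by omega⟩ < z i := hz (by rw [Fin.lt_def]; show i.1 - 1 < i.1; omega)
        have hsucc : z i < z ⟨i.1 + 1, by omega⟩ := hz (by rw [Fin.lt_def]; simp)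
        rw [dif_pos h0, dif_pos h1, vor_mid n z hz i h0 h1,
          lapIcc ε (z i) _ _ hε (by linarith) (by linarith)]
        have hi : (⟨i.1, by omega⟩ : Fin (n + 2)) = i := by apply Fin.ext; rfl
        rw [hi]
        rw [show -ε * (z i - (z ⟨i.1 - 1, by omega⟩ + z i) / 2)
            = -ε * (z i - z ⟨i.1 - 1, by omega⟩) / 2 by ring,
          show -ε * ((z i + z ⟨i.1 + 1, by omega⟩) / 2 - z i)
            = -ε * (z ⟨i.1 + 1, by omega⟩ - z i) / 2 by ring]
      · -- last
        have h1' : i.1 = n + 1 := by omega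
        have hi : i = Fin.last (n + 1) := Fin.ext (by simp [Fin.last, h1'])
        subst hi
        rw [dif_pos h0, dif_neg (by simp)]
        have hpred : z ⟨n, by omega⟩ < z (Fin.last (n + 1)) :=
          hz (by rw [Fin.lt_def]; simp [Fin.last])
        rw [vor_last n z hz, lapIci ε _ _ hε (by linarith)]
        have e1 : (⟨(Fin.last (n+1)).1, by omega⟩ : Fin (n + 2)) = Fin.last (n + 1) := by
          apply Fin.ext; rfl
        have e2 : (⟨(Fin.last (n+1)).1 - 1, by omega⟩ : Fin (n + 2)) = ⟨n, by omega⟩ := by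
          apply Fin.ext; simp [Fin.last]
        rw [e1, e2]
        rw [show -ε * (z (Fin.last (n+1)) - (z ⟨n, by omega⟩ + z (Fin.last (n+1))) / 2)
            = -ε * (z (Fin.last (n+1)) - z ⟨n, by omega⟩) / 2 by ring]
        ring
  rw [Finset.sum_congr rfl (fun i _ => hP i)]
  rw [Finset.sum_sub_distrib, Finset.sum_sub_distrib]
  have hA : (∑ i : Fin (n + 2), (if h : 0 < i.1 then
        Real.exp (-ε * (z ⟨i.1, by omega⟩ - z ⟨i.1 - 1, by omega⟩) / 2) / 2 else 0))
      = (∑ j : Fin (n + 1), Real.exp (-ε * (z j.succ - z j.castSucc) / 2)) / 2 := by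
    rw [Fin.sum_univ_succ, dif_neg (by simp), Finset.sum_div]
    rw [zero_add]
    apply Finset.sum_congr rfl
    intro j _
    rw [dif_pos (by simp)]
    have e1 : (⟨((j.succ : Fin (n + 2))).1, by omega⟩ : Fin (n + 2)) = j.succ := Fin.ext rfl
    have e2 : (⟨((j.succ : Fin (n + 2))).1 - 1, by omega⟩ : Fin (n + 2)) = j.castSucc :=
      Fin.ext (by simp)
    rw [e1, e2]
  have hB : (∑ i : Fin (n + 2), (if h : i.1 < n + 1 then
        Real.exp (-ε * (z ⟨i.1 + 1, by omega⟩ - z ⟨i.1, by omega⟩) / 2) / 2 else 0))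
      = (∑ j : Fin (n + 1), Real.exp (-ε * (z j.succ - z j.castSucc) / 2)) / 2 := by
    rw [Fin.sum_univ_castSucc, dif_neg (by simp), Finset.sum_div]
    rw [add_zero]
    apply Finset.sum_congr rfl
    intro j _
    rw [dif_pos (by simpa using j.2)]
    have e1 : (⟨((j.castSucc : Fin (n + 2))).1 + 1, by have := j.2; rw [Fin.coe_castSucc]; omega⟩ : Fin (n + 2)) = j.succ :=
      Fin.ext (by simp)
    have e2 : (⟨((j.castSucc : Fin (n + 2))).1, by omega⟩ : Fin (n + 2)) = j.castSucc :=
      Fin.ext rfl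
    rw [e1, e2]
  rw [hA, hB]
  simp only [Finset.sum_const, Finset.card_univ, Fintype.card_fin, nsmul_eq_mul, mul_one]
  push_cast
  ring

theorem aux_main (n : ℕ) (z : Fin (n + 2) → ℝ) (hz : StrictMono z)
    (hgap : (∑ j : Fin (n + 1), (z j.succ - z j.castSucc)) ≤ 1) (ε : ℝ) (hε : 0 < ε) :
    (∑ i, ∫ x in {x : ℝ | ∀ k, |x - z i| ≤ |x - z k|},
        (ε / 2) * Real.exp (-ε * |x - z i|)) =
      ((n + 2 : ℕ) : ℝ) - ∑ j : Fin (n + 1),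
          Real.exp (-ε * (z j.succ - z j.castSucc) / 2) ∧
    (1 / ((n + 2 : ℕ) : ℝ)) *
        ((∑ i, ∫ x in {x : ℝ | ∀ k, |x - z i| ≤ |x - z k|},
          (ε / 2) * Real.exp (-ε * |x - z i|)) - 1) ≤
      ((((n + 2 : ℕ) : ℝ) - 1) / ((n + 2 : ℕ) : ℝ)) *
        (1 - Real.exp (-ε / (2 * (((n + 2 : ℕ) : ℝ) - 1)))) := by
  have heq := aux_eq n z hz ε hε
  refine ⟨heq, ?_⟩
  rw [heq]
  -- Jensen
  set S := ∑ j : Fin (n + 1), Real.exp (-ε * (z j.succ - z j.castSucc) / 2) with hS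
  have hJ : ((n : ℝ) + 1) * Real.exp (-ε / (2 * ((n : ℝ) + 1))) ≤ S := by
    have hn1 : (0 : ℝ) < (n : ℝ) + 1 := by positivity
    have hjen := convexOn_exp.map_sum_le (t := Finset.univ)
      (w := fun _ : Fin (n + 1) => 1 / ((n : ℝ) + 1))
      (p := fun j => -ε * (z j.succ - z j.castSucc) / 2)
      (fun _ _ => by positivity)
      (by simp [Finset.sum_const]; field_simp)
      (fun _ _ => Set.mem_univ _)
    simp only [smul_eq_mul] at hjen
    have harg : (∑ j : Fin (n + 1), (1 / ((n : ℝ) + 1)) * (-ε * (z j.succ - z j.castSucc) / 2))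
        = (-ε / (2 * ((n : ℝ) + 1))) * (∑ j : Fin (n + 1), (z j.succ - z j.castSucc)) := by
      rw [Finset.mul_sum]
      apply Finset.sum_congr rfl
      intro j _
      rw [div_mul_eq_mul_div, div_mul_eq_mul_div,
        div_eq_div_iff (by positivity) (by positivity)]
      ring
    rw [harg] at hjen
    have hmono : Real.exp (-ε / (2 * ((n : ℝ) + 1)))
        ≤ Real.exp ((-ε / (2 * ((n : ℝ) + 1))) * (∑ j : Fin (n + 1), (z j.succ - z j.castSucc))) := by
      apply Real.exp_le_exp.mpr
      have hc : -ε / (2 * ((n : ℝ) + 1)) < 0 := by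
        apply div_neg_of_neg_of_pos <;> [linarith; positivity]
      nlinarith [hgap, hc]
    have hrhs : (∑ j : Fin (n + 1), (1 / ((n : ℝ) + 1)) *
        Real.exp (-ε * (z j.succ - z j.castSucc) / 2)) = S / ((n : ℝ) + 1) := by
      rw [hS, Finset.sum_div]
      apply Finset.sum_congr rfl
      intro j _
      ring
    rw [hrhs] at hjen
    have := hmono.trans hjen
    rw [le_div_iff₀ hn1] at this
    linarith
  have hN : (0 : ℝ) < ((n + 2 : ℕ) : ℝ) := by positivity
  have hcast : ((n + 2 : ℕ) : ℝ) - 1 = (n : ℝ) + 1 := by push_cast; ring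
  rw [hcast]
  rw [one_div, inv_mul_eq_div, div_mul_eq_mul_div, div_le_div_iff₀ hN hN]
  have hX : 0 < Real.exp (-ε / (2 * ((n : ℝ) + 1))) := Real.exp_pos _
  nlinarith [hJ, hN]

/-- Let `z₁ < … < z_m` be reals with `Σ_j (z_{j+1} − z_j) ≤ 1`, and add
Laplace noise with scale `b = 1/ε` (density `(ε/2)·e^{−ε|x − z_i|}`).  With the Voronoi cells
`Θ_i = {x | ∀ k, |x − z_i| ≤ |x − z_k|}`,
`Σ_i Pr(z_i + Lap(b) ∈ Θ_i) = m − Σ_j e^{−εΔ_j/2}` with `Δ_j = z_{j+1} − z_j`, and hence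
`(1/m)(Σ_i Pr(z_i + Lap ∈ Θ_i) − 1) ≤ ((m−1)/m)·(1 − e^{−ε/(2(m−1))})`. -/
theorem laplace_voronoi_sum (m : ℕ) (hm : 2 ≤ m) (z : Fin m → ℝ) (hz : StrictMono z)
    (hgap : (∑ j : Fin (m - 1),
        (z ⟨j.1 + 1, by have := j.2; omega⟩ - z ⟨j.1, by have := j.2; omega⟩)) ≤ 1)
    (ε : ℝ) (hε : 0 < ε) :
    (∑ i, ∫ x in {x : ℝ | ∀ k, |x - z i| ≤ |x - z k|},
        (ε / 2) * Real.exp (-ε * |x - z i|)) =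
      (m : ℝ) - ∑ j : Fin (m - 1),
          Real.exp (-ε * (z ⟨j.1 + 1, by have := j.2; omega⟩ -
            z ⟨j.1, by have := j.2; omega⟩) / 2) ∧
    (1 / (m : ℝ)) *
        ((∑ i, ∫ x in {x : ℝ | ∀ k, |x - z i| ≤ |x - z k|},
          (ε / 2) * Real.exp (-ε * |x - z i|)) - 1) ≤
      (((m : ℝ) - 1) / m) * (1 - Real.exp (-ε / (2 * ((m : ℝ) - 1)))) := by
  obtain ⟨n, rfl⟩ : ∃ n, m = n + 2 := ⟨m - 2, by omega⟩
  have hgap' : (∑ j : Fin (n + 1), (z j.succ - z j.castSucc)) ≤ 1 := hgap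
  exact aux_main n z hz hgap' ε hε
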